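/- Let (X,d,μ) be an unbounded metric measure space, a ∈ X, p > 1, and (Ẋ, d̂_a, μ̂_a) its sphericalization with dμ̂_a(x) = dμ(x)/(1+d(x,a))^{2p}. Let Ω ⊂ X be open and u ∈ D^p(Ω,d,μ) (u measurable with an upper gradient in L^p). Then u ∈ D^p(Ω, d̂_a, μ̂_a), the minimal p-weak upper gradients are related by ĝ_u(x) = g_u(x)(1+d(x,a))^2 for a.e. x ∈ Ω, and the p-energies coincide: ∫_Ω g_u^p dμ = ∫_Ω ĝ_u^p dμ̂_a. -/

import Mathlib

open MeasureTheory Metric Set ENNReal Filter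

/-- A (nonconstant, compact, rectifiable) curve with respect to a distance
function `D`, parameterized by arc length on `[0, len]`
(so that it is `1`-Lipschitz with respect to `D`). -/
structure CurveD (Y : Type*) (D : Y → Y → ℝ) where
  toFun : ℝ → Y
  len : ℝ
  len_pos : 0 < len
  lip : ∀ s ∈ Set.Icc (0:ℝ) len, ∀ t ∈ Set.Icc (0:ℝ) len, D (toFun s) (toFun t) ≤ |s - t|

/-- The curve lies in the set `Ω`. -/
def CurveD.inSet {Y : Type*} {D : Y → Y → ℝ} (γ : CurveD Y D) (Ω : Set Y) : Prop :=
  ∀ t ∈ Set.Icc (0:ℝ) γ.len, γ.toFun t ∈ Ω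

/-- Line integral `∫_γ ρ ds̃`, where the arc length element is `ds̃ = w ds`. -/
noncomputable def lineInt {Y : Type*} {D : Y → Y → ℝ} (γ : CurveD Y D) (ρ w : Y → ℝ≥0∞) : ℝ≥0∞ :=
  ∫⁻ t in Set.Icc (0:ℝ) γ.len, ρ (γ.toFun t) * w (γ.toFun t)

/-- The `p`-modulus of a curve family `Γ`, with energy measure `μ` and arc
length weighted by `w`. -/
noncomputable def pMod {Y : Type*} [MeasurableSpace Y] {D : Y → Y → ℝ} (p : ℝ) (μ : Measure Y)
    (w : Y → ℝ≥0∞) (Γ : Set (CurveD Y D)) : ℝ≥0∞ :=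
  ⨅ (ρ : Y → ℝ≥0∞) (_ : Measurable ρ) (_ : ∀ γ ∈ Γ, 1 ≤ lineInt γ ρ w), ∫⁻ y, ρ y ^ p ∂μ

/-- The absolute value of an extended real, as an element of `[0,∞]`. -/
noncomputable def eAbs (x : EReal) : ℝ≥0∞ :=
  if max x (-x) = (⊤ : EReal) then ⊤ else ENNReal.ofReal (max x (-x)).toReal

/-- `g` is an upper gradient of `u : Ω → [-∞,∞]` (arc length weighted by `w`). -/
def IsUpperGradientOn {Y : Type*} (D : Y → Y → ℝ) (w : Y → ℝ≥0∞) (Ω : Set Y)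
    (u : Y → EReal) (g : Y → ℝ≥0∞) : Prop :=
  ∀ γ : CurveD Y D, γ.inSet Ω →
    eAbs (u (γ.toFun γ.len) - u (γ.toFun 0)) ≤ lineInt γ g w

/-- `g` is a `p`-weak upper gradient of `u` in `Ω`: the upper gradient
inequality holds along `p`-almost every curve. -/
def IsPWUGOn {Y : Type*} [MeasurableSpace Y] (D : Y → Y → ℝ) (p : ℝ) (μ : Measure Y)
    (w : Y → ℝ≥0∞) (Ω : Set Y) (u : Y → EReal) (g : Y → ℝ≥0∞) : Prop :=
  ∃ Γ₀ : Set (CurveD Y D), pMod p μ w Γ₀ = 0 ∧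
    ∀ γ : CurveD Y D, γ.inSet Ω → γ ∉ Γ₀ →
      eAbs (u (γ.toFun γ.len) - u (γ.toFun 0)) ≤ lineInt γ g w

/-- `g` has locally finite `p`-energy in `Ω`. -/
def IsLocLp {Y : Type*} [MetricSpace Y] [MeasurableSpace Y] (p : ℝ) (μ : Measure Y)
    (Ω : Set Y) (g : Y → ℝ≥0∞) : Prop :=
  ∀ x ∈ Ω, ∃ r > (0:ℝ), ∫⁻ y in Ω ∩ Metric.ball x r, g y ^ p ∂μ < ⊤

/-- `g` is the minimal `p`-weak upper gradient of `u` in `Ω`. -/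
def IsMinimalPWUGOn {Y : Type*} [MetricSpace Y] [MeasurableSpace Y] (D : Y → Y → ℝ) (p : ℝ)
    (μ : Measure Y) (w : Y → ℝ≥0∞) (Ω : Set Y) (u : Y → EReal) (g : Y → ℝ≥0∞) : Prop :=
  IsPWUGOn D p μ w Ω u g ∧ IsLocLp p μ Ω g ∧
    ∀ h : Y → ℝ≥0∞, IsPWUGOn D p μ w Ω u h → IsLocLp p μ Ω h →
      ∀ᵐ x ∂(μ.restrict Ω), g x ≤ h x

/-- The `p`-th power of the Newtonian norm of `u` on `Ω`. -/
noncomputable def NpNormP {Y : Type*} [MeasurableSpace Y] (D : Y → Y → ℝ) (p : ℝ)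
    (μ : Measure Y) (w : Y → ℝ≥0∞) (Ω : Set Y) (u : Y → EReal) : ℝ≥0∞ :=
  (∫⁻ x in Ω, eAbs (u x) ^ p ∂μ) +
    ⨅ (g : Y → ℝ≥0∞) (_ : IsUpperGradientOn D w Ω u g), ∫⁻ x in Ω, g x ^ p ∂μ

/-- The Sobolev capacity of `E`. -/
noncomputable def sobCap {Y : Type*} [MeasurableSpace Y] (D : Y → Y → ℝ) (p : ℝ)
    (μ : Measure Y) (w : Y → ℝ≥0∞) (E : Set Y) : ℝ≥0∞ :=
  ⨅ (u : Y → EReal) (_ : ∀ x ∈ E, 1 ≤ u x), NpNormP D p μ w Set.univ u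

/-- The sphericalized arc length weight `ds̃ = ds/(1+d(x,a))²`. -/
noncomputable def hatW {X : Type*} [MetricSpace X] (a : X) : X → ℝ≥0∞ :=
  fun x => ENNReal.ofReal ((1 + dist x a) ^ 2)⁻¹

/-- The sphericalization measure `dμ̂ₐ = dμ/(1+d(x,a))^{2p}`. -/
noncomputable def muHat {X : Type*} [MetricSpace X] [MeasurableSpace X] (μ : Measure X)
    (a : X) (p : ℝ) : Measure X :=
  μ.withDensity fun x => ENNReal.ofReal ((1 + dist x a) ^ (2 * p))⁻¹

/-- A `q`-Poincaré inequality for `(X,d,μ)`. -/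
def PoincareIneqP {X : Type*} [MetricSpace X] [MeasurableSpace X] (q : ℝ) (μ : Measure X) : Prop :=
  ∃ C > (0:ℝ), ∃ lam ≥ (1:ℝ), ∀ (u : X → ℝ) (g : X → ℝ≥0∞), Measurable u → Measurable g →
    MeasureTheory.LocallyIntegrable u μ →
    IsUpperGradientOn dist (fun _ => 1) Set.univ (fun x => (u x : EReal)) g →
    ∀ (x : X) (r : ℝ), 0 < r →
      ⨍⁻ y in Metric.ball x r, ENNReal.ofReal |u y - ⨍ z in Metric.ball x r, u z ∂μ| ∂μ ≤
        ENNReal.ofReal (C * Metric.diam (Metric.ball x r)) *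
          (⨍⁻ y in Metric.ball x (lam * r), g y ^ q ∂μ) ^ (1/q)

/-- `μ` is doubling and all balls have positive finite measure. -/
def DoublingMeas {X : Type*} [MetricSpace X] [MeasurableSpace X] (μ : Measure X) : Prop :=
  (∀ (x : X) (r : ℝ), 0 < r → 0 < μ (Metric.ball x r) ∧ μ (Metric.ball x r) < ⊤) ∧
    ∃ C > (0:ℝ), ∀ (x : X) (r : ℝ), 0 < r →
      μ (Metric.ball x (2 * r)) ≤ ENNReal.ofReal C * μ (Metric.ball x r)

/-- `μ` is Ahlfors `Q`-regular. -/
def AhlforsRegular {X : Type*} [MetricSpace X] [MeasurableSpace X] (μ : Measure X) (Q : ℝ) : Prop :=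
  ∃ C > (0:ℝ), ∀ (x : X) (r : ℝ), 0 < r →
    ENNReal.ofReal (C⁻¹ * r ^ Q) ≤ μ (Metric.ball x r) ∧
      μ (Metric.ball x r) ≤ ENNReal.ofReal (C * r ^ Q)

/-!
A change of the arc-length element by a positive finite weight `w`, `ds̃ = w ds`, together
with the change of measure `dμ̃ = wᵖ dμ`, is a conformal change: `ρ ↦ ρ / w` is a bijection
between the admissible densities of the two structures which preserves both line integrals
and `p`-energies. Hence curve families of modulus zero, `p`-weak upper gradients, local
`Lᵖ` integrability and null sets all correspond, so the minimal `p`-weak upper gradients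
satisfy `ĝ = g / w`. Sphericalization is the case `w x = (1 + d(x,a))⁻²`.
-/

section ConformalWeight

variable {Y : Type*} {D : Y → Y → ℝ} {w : Y → ℝ≥0∞}

theorem lineInt_mul_weight (γ : CurveD Y D) (ρ : Y → ℝ≥0∞) :
    lineInt γ (ρ * w) (fun _ => 1) = lineInt γ ρ w := by
  simp only [lineInt, Pi.mul_apply, mul_one]

theorem lineInt_div_weight (hw0 : ∀ x, w x ≠ 0) (hwtop : ∀ x, w x ≠ ⊤)
    (γ : CurveD Y D) (ρ : Y → ℝ≥0∞) :
    lineInt γ (ρ / w) w = lineInt γ ρ (fun _ => 1) := by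
  simp only [lineInt, Pi.div_apply, ENNReal.div_mul_cancel (hw0 _) (hwtop _), mul_one]

theorem IsUpperGradientOn.div_weight (hw0 : ∀ x, w x ≠ 0) (hwtop : ∀ x, w x ≠ ⊤)
    {Ω : Set Y} {u : Y → EReal} {g : Y → ℝ≥0∞}
    (hg : IsUpperGradientOn D (fun _ => 1) Ω u g) : IsUpperGradientOn D w Ω u (g / w) :=
  fun γ hγ => (lineInt_div_weight hw0 hwtop γ g).symm ▸ hg γ hγ

variable [MeasurableSpace Y]

theorem lintegral_div_rpow_withDensity (hw : Measurable w) (hw0 : ∀ x, w x ≠ 0)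
    (hwtop : ∀ x, w x ≠ ⊤) (μ : Measure Y) {p : ℝ} (hp : 0 ≤ p) (ρ : Y → ℝ≥0∞) :
    ∫⁻ x, (ρ / w) x ^ p ∂μ.withDensity (fun x => w x ^ p) = ∫⁻ x, ρ x ^ p ∂μ := by
  rw [lintegral_withDensity_eq_lintegral_mul_non_measurable _ (hw.pow_const p)
    (.of_forall fun x => (ENNReal.rpow_ne_top_of_nonneg hp (hwtop x)).lt_top)]
  refine lintegral_congr fun x => ?_
  rw [Pi.mul_apply, Pi.div_apply, ← ENNReal.mul_rpow_of_nonneg _ _ hp,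
    ENNReal.mul_div_cancel (hw0 x) (hwtop x)]

theorem lintegral_rpow_withDensity (hw : Measurable w) (hw0 : ∀ x, w x ≠ 0)
    (hwtop : ∀ x, w x ≠ ⊤) (μ : Measure Y) {p : ℝ} (hp : 0 ≤ p) (ρ : Y → ℝ≥0∞) :
    ∫⁻ x, ρ x ^ p ∂μ.withDensity (fun x => w x ^ p) = ∫⁻ x, (ρ * w) x ^ p ∂μ := by
  rw [← lintegral_div_rpow_withDensity hw hw0 hwtop μ hp (ρ * w)]
  simp only [Pi.div_apply, Pi.mul_apply, ENNReal.mul_div_cancel_right (hw0 _) (hwtop _)]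

theorem ae_withDensity_iff_of_ne_zero {f : Y → ℝ≥0∞} (hf : Measurable f) (hf0 : ∀ x, f x ≠ 0)
    (μ : Measure Y) {P : Y → Prop} :
    (∀ᵐ x ∂μ.withDensity f, P x) ↔ ∀ᵐ x ∂μ, P x := by
  rw [ae_withDensity_iff hf]
  exact eventually_congr (.of_forall fun x => imp_iff_right (hf0 x))

theorem pMod_withDensity_rpow (hw : Measurable w) (hw0 : ∀ x, w x ≠ 0) (hwtop : ∀ x, w x ≠ ⊤)
    (μ : Measure Y) {p : ℝ} (hp : 0 ≤ p) (Γ : Set (CurveD Y D)) :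
    pMod p (μ.withDensity fun x => w x ^ p) w Γ = pMod p μ (fun _ => 1) Γ := by
  apply le_antisymm
  · refine le_iInf₂ fun ρ hρ => le_iInf fun hadm => ?_
    refine iInf₂_le_of_le (ρ / w) (hρ.div hw) (iInf_le_of_le (fun γ hγ => ?_) ?_)
    · exact (lineInt_div_weight hw0 hwtop γ ρ).symm ▸ hadm γ hγ
    · exact (lintegral_div_rpow_withDensity hw hw0 hwtop μ hp ρ).le
  · refine le_iInf₂ fun ρ hρ => le_iInf fun hadm => ?_
    refine iInf₂_le_of_le (ρ * w) (hρ.mul hw) (iInf_le_of_le (fun γ hγ => ?_) ?_)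
    · exact (lineInt_mul_weight γ ρ).symm ▸ hadm γ hγ
    · exact (lintegral_rpow_withDensity hw hw0 hwtop μ hp ρ).ge

theorem IsPWUGOn.div_weight (hw : Measurable w) (hw0 : ∀ x, w x ≠ 0) (hwtop : ∀ x, w x ≠ ⊤)
    {p : ℝ} (hp : 0 ≤ p) {μ : Measure Y} {Ω : Set Y} {u : Y → EReal} {g : Y → ℝ≥0∞}
    (hg : IsPWUGOn D p μ (fun _ => 1) Ω u g) :
    IsPWUGOn D p (μ.withDensity fun x => w x ^ p) w Ω u (g / w) := by
  obtain ⟨Γ₀, hΓ₀, hug⟩ := hg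
  refine ⟨Γ₀, (pMod_withDensity_rpow hw hw0 hwtop μ hp Γ₀).trans hΓ₀, fun γ hγ hγΓ₀ => ?_⟩
  exact (lineInt_div_weight hw0 hwtop γ g).symm ▸ hug γ hγ hγΓ₀

theorem IsPWUGOn.mul_weight (hw : Measurable w) (hw0 : ∀ x, w x ≠ 0) (hwtop : ∀ x, w x ≠ ⊤)
    {p : ℝ} (hp : 0 ≤ p) {μ : Measure Y} {Ω : Set Y} {u : Y → EReal} {g : Y → ℝ≥0∞}
    (hg : IsPWUGOn D p (μ.withDensity fun x => w x ^ p) w Ω u g) :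
    IsPWUGOn D p μ (fun _ => 1) Ω u (g * w) := by
  obtain ⟨Γ₀, hΓ₀, hug⟩ := hg
  refine ⟨Γ₀, (pMod_withDensity_rpow hw hw0 hwtop μ hp Γ₀).symm.trans hΓ₀, fun γ hγ hγΓ₀ => ?_⟩
  exact (lineInt_mul_weight γ g).symm ▸ hug γ hγ hγΓ₀

end ConformalWeight

section MetricConformalWeight

variable {Y : Type*} [MetricSpace Y] [MeasurableSpace Y] [OpensMeasurableSpace Y]
  {w : Y → ℝ≥0∞} {p : ℝ} {μ : Measure Y} {Ω : Set Y}

theorem IsLocLp.div_weight (hw : Measurable w) (hw0 : ∀ x, w x ≠ 0) (hwtop : ∀ x, w x ≠ ⊤)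
    (hp : 0 ≤ p) (hΩ : IsOpen Ω) {g : Y → ℝ≥0∞} (hg : IsLocLp p μ Ω g) :
    IsLocLp p (μ.withDensity fun x => w x ^ p) Ω (g / w) := by
  intro x hx
  obtain ⟨r, hr, hfin⟩ := hg x hx
  refine ⟨r, hr, ?_⟩
  rwa [restrict_withDensity (hΩ.measurableSet.inter measurableSet_ball),
    lintegral_div_rpow_withDensity hw hw0 hwtop _ hp]

theorem IsLocLp.mul_weight (hw : Measurable w) (hw0 : ∀ x, w x ≠ 0) (hwtop : ∀ x, w x ≠ ⊤)
    (hp : 0 ≤ p) (hΩ : IsOpen Ω) {g : Y → ℝ≥0∞}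
    (hg : IsLocLp p (μ.withDensity fun x => w x ^ p) Ω g) : IsLocLp p μ Ω (g * w) := by
  intro x hx
  obtain ⟨r, hr, hfin⟩ := hg x hx
  refine ⟨r, hr, ?_⟩
  rwa [restrict_withDensity (hΩ.measurableSet.inter measurableSet_ball),
    lintegral_rpow_withDensity hw hw0 hwtop _ hp] at hfin

theorem IsMinimalPWUGOn.ae_eq_div_weight (hw : Measurable w) (hw0 : ∀ x, w x ≠ 0)
    (hwtop : ∀ x, w x ≠ ⊤) (hp : 0 ≤ p) (hΩ : IsOpen Ω) {D : Y → Y → ℝ} {u : Y → EReal}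
    {g ĝ : Y → ℝ≥0∞} (hg : IsMinimalPWUGOn D p μ (fun _ => 1) Ω u g)
    (hĝ : IsMinimalPWUGOn D p (μ.withDensity fun x => w x ^ p) w Ω u ĝ) :
    ∀ᵐ x ∂μ.restrict Ω, ĝ x = g x / w x := by
  obtain ⟨hgP, hgL, hgMin⟩ := hg
  obtain ⟨hĝP, hĝL, hĝMin⟩ := hĝ
  have hĝ_le : ∀ᵐ x ∂μ.restrict Ω, ĝ x ≤ g x / w x := by
    have := hĝMin _ (hgP.div_weight hw hw0 hwtop hp) (hgL.div_weight hw hw0 hwtop hp hΩ)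
    rwa [restrict_withDensity hΩ.measurableSet,
      ae_withDensity_iff_of_ne_zero (hw.pow_const p) fun x => ?_] at this
    exact (ENNReal.rpow_pos (pos_iff_ne_zero.2 (hw0 x)) (hwtop x)).ne'
  have hg_le : ∀ᵐ x ∂μ.restrict Ω, g x ≤ ĝ x * w x :=
    hgMin _ (hĝP.mul_weight hw hw0 hwtop hp) (hĝL.mul_weight hw hw0 hwtop hp hΩ)
  filter_upwards [hĝ_le, hg_le] with x hĝx hgx
  exact hĝx.antisymm ((ENNReal.div_le_iff (hw0 x) (hwtop x)).2 hgx)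

end MetricConformalWeight

section Sphericalization

variable {X : Type*} [MetricSpace X]

theorem hatW_ne_zero (a x : X) : hatW a x ≠ 0 :=
  (ENNReal.ofReal_pos.2 (by positivity)).ne'

theorem hatW_ne_top (a x : X) : hatW a x ≠ ⊤ := ENNReal.ofReal_ne_top

theorem div_hatW (a x : X) (r : ℝ≥0∞) :
    r / hatW a x = r * ENNReal.ofReal ((1 + dist x a) ^ 2) := by
  rw [div_eq_mul_inv, hatW, ENNReal.ofReal_inv_of_pos (by positivity), inv_inv]

theorem hatW_rpow (a x : X) (p : ℝ) :
    hatW a x ^ p = ENNReal.ofReal ((1 + dist x a) ^ (2 * p))⁻¹ := by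
  have hpos : 0 < 1 + dist x a := by positivity
  rw [hatW, ENNReal.ofReal_rpow_of_pos (by positivity), Real.inv_rpow (by positivity),
    ← Real.rpow_natCast, ← Real.rpow_mul hpos.le, Nat.cast_ofNat]

theorem muHat_eq_withDensity [MeasurableSpace X] (μ : Measure X) (a : X) (p : ℝ) :
    muHat μ a p = μ.withDensity fun x => hatW a x ^ p := by
  simp only [muHat, hatW_rpow]

theorem measurable_hatW [MeasurableSpace X] [OpensMeasurableSpace X] (a : X) : Measurable (hatW a) := by
  unfold hatW
  fun_prop

end Sphericalization

theorem minimal_pwug_sphericalization_general {X : Type*} [MetricSpace X] [MeasurableSpace X]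
    [BorelSpace X] (μ : Measure X) (a : X) (p : ℝ) (hp : 1 < p)
    (Ω : Set X) (hΩ : IsOpen Ω) (u : X → EReal)
    (hDp : ∃ g₀ : X → ℝ≥0∞, Measurable g₀ ∧
      IsUpperGradientOn dist (fun _ => 1) Ω u g₀ ∧ ∫⁻ x in Ω, g₀ x ^ p ∂μ < ⊤)
    (g gh : X → ℝ≥0∞)
    (hg : IsMinimalPWUGOn dist p μ (fun _ => 1) Ω u g)
    (hgh : IsMinimalPWUGOn dist p (muHat μ a p) (hatW a) Ω u gh) :
    (∃ gh0 : X → ℝ≥0∞, Measurable gh0 ∧ IsUpperGradientOn dist (hatW a) Ω u gh0 ∧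
      ∫⁻ x in Ω, gh0 x ^ p ∂(muHat μ a p) < ⊤) ∧
    (∀ᵐ x ∂(μ.restrict Ω), gh x = g x * ENNReal.ofReal ((1 + dist x a) ^ 2)) ∧
    ∫⁻ x in Ω, g x ^ p ∂μ = ∫⁻ x in Ω, gh x ^ p ∂(muHat μ a p) := by
  have hp0 : 0 ≤ p := zero_le_one.trans hp.le
  have hw := measurable_hatW a
  have hw0 := hatW_ne_zero a
  have hwtop := hatW_ne_top a
  rw [muHat_eq_withDensity] at hgh ⊢
  have energy (ρ : X → ℝ≥0∞) : ∫⁻ x in Ω, (ρ / hatW a) x ^ p ∂μ.withDensity (hatW a · ^ p) =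
      ∫⁻ x in Ω, ρ x ^ p ∂μ := by
    rw [restrict_withDensity hΩ.measurableSet, lintegral_div_rpow_withDensity hw hw0 hwtop _ hp0]
  have hgh_eq := hg.ae_eq_div_weight hw hw0 hwtop hp0 hΩ hgh
  refine ⟨?_, ?_, ?_⟩
  · obtain ⟨g₀, hg₀, hg₀_ug, hg₀_fin⟩ := hDp
    exact ⟨g₀ / hatW a, hg₀.div hw, hg₀_ug.div_weight hw0 hwtop, (energy g₀).trans_lt hg₀_fin⟩
  · filter_upwards [hgh_eq] with x hx
    rw [hx, div_hatW]
  · rw [← energy g]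
    refine lintegral_congr_ae ?_
    filter_upwards [(withDensity_absolutelyContinuous μ _).restrict Ω hgh_eq] with x hx
    rw [hx, Pi.div_apply]

/-- If `u ∈ D^p(Ω,d,μ)` then `u ∈ D^p(Ω,d̂_a,μ̂_a)`, the minimal `p`-weak
upper gradients satisfy `gh_u(x) = g_u(x)(1+d(x,a))²` a.e., and the
`p`-energies coincide: `∫_Ω g_u^p dμ = ∫_Ω gh_u^p dμ̂_a`. -/
theorem minimal_pwug_sphericalization {X : Type*} [MetricSpace X] [MeasurableSpace X]
    [BorelSpace X] (μ : Measure X) (a : X) (p : ℝ) (hp : 1 < p)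
    (hunb : ¬ Bornology.IsBounded (Set.univ : Set X))
    (Ω : Set X) (hΩ : IsOpen Ω) (u : X → EReal)
    (hDp : ∃ g₀ : X → ℝ≥0∞, Measurable g₀ ∧
      IsUpperGradientOn dist (fun _ => 1) Ω u g₀ ∧ ∫⁻ x in Ω, g₀ x ^ p ∂μ < ⊤)
    (g gh : X → ℝ≥0∞)
    (hg : IsMinimalPWUGOn dist p μ (fun _ => 1) Ω u g)
    (hgh : IsMinimalPWUGOn dist p (muHat μ a p) (hatW a) Ω u gh) :
    (∃ gh0 : X → ℝ≥0∞, Measurable gh0 ∧ IsUpperGradientOn dist (hatW a) Ω u gh0 ∧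
      ∫⁻ x in Ω, gh0 x ^ p ∂(muHat μ a p) < ⊤) ∧
    (∀ᵐ x ∂(μ.restrict Ω), gh x = g x * ENNReal.ofReal ((1 + dist x a) ^ 2)) ∧
    ∫⁻ x in Ω, g x ^ p ∂μ = ∫⁻ x in Ω, gh x ^ p ∂(muHat μ a p) :=
  minimal_pwug_sphericalization_general μ a p hp Ω hΩ u hDp g gh hg hgh
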